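/- Let X be a complex manifold and ∇ a torsion-free T^{1,0}X-connection on T^{1,0}X. Then the (1,1)-part R^{1,1} of the curvature (∇ + ∂̄)² satisfies R^{1,1}(u, v)w = R^{1,1}(u, w)v for all smooth sections u of T^{0,1}X and v, w of T^{1,0}X. -/

import Mathlib

/-!
STATEMENT 19: Let `X` be a complex manifold and `∇` a torsion-free `T^{1,0}X`-connection
on `T^{1,0}X`. Then the `(1,1)`-part `R^{1,1}` of the curvature `(∇ + ∂̄)²` satisfies
`R^{1,1}(u, v)w = R^{1,1}(u, w)v` for all smooth sections `u` of `T^{0,1}X` and `v, w` of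
`T^{1,0}X`.

We model the complexified tangent bundle of `X` through the `ℂ`-module `W` of smooth
complex vector fields, equipped with the Lie bracket `lie` and the projections
`p10`, `p01` onto the `(1,0)`- and `(0,1)`-parts; integrability of the complex structure
is recorded by involutivity of both distributions. A `T^{1,0}X`-connection `∇` on
`T^{1,0}X` differentiates `(1,0)`-vector fields along `(1,0)`-vector fields; it is
torsion-free if `∇_v w − ∇_w v = [v, w]^{1,0}`. The `(1,1)`-part of the curvature of
`∇ + ∂̄` is `R^{1,1}(u,v)w = [u, ∇_v w]^{1,0} − ∇_v([u,w]^{1,0}) − ∇_{[u,v]^{1,0}} w −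
[[u,v]^{0,1}, w]^{1,0}`.
-/

structure ComplexManifoldConnectionModel where
  /-- the smooth complex vector fields on `X`, i.e. sections of `TX ⊗ ℂ` -/
  W : Type
  [grpW : AddCommGroup W]
  [modW : Module ℂ W]
  /-- the Lie bracket of complex vector fields -/
  lie : W → W → W
  lie_antisymm : ∀ a b, lie a b = - lie b a
  lie_add_left : ∀ a a' b, lie (a + a') b = lie a b + lie a' b
  jacobi : ∀ a b c, lie a (lie b c) + lie b (lie c a) + lie c (lie a b) = 0
  /-- projection onto the `(1,0)`-part -/
  p10 : W →ₗ[ℂ] W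
  /-- projection onto the `(0,1)`-part -/
  p01 : W →ₗ[ℂ] W
  p_sum : ∀ a, p10 a + p01 a = a
  p10_p10 : ∀ a, p10 (p10 a) = p10 a
  p10_p01 : ∀ a, p10 (p01 a) = 0
  /-- `T^{1,0}X` is involutive (integrability of the complex structure) -/
  invol10 : ∀ a b, p10 a = a → p10 b = b → p10 (lie a b) = lie a b
  /-- `T^{0,1}X` is involutive (integrability of the complex structure) -/
  invol01 : ∀ a b, p01 a = a → p01 b = b → p01 (lie a b) = lie a b
  /-- the `T^{1,0}X`-connection `∇` on `T^{1,0}X` (its values on `(1,0)`-inputs are the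
  meaningful ones) -/
  nabla : W → W → W
  /-- `∇` is torsion-free: `∇_v w − ∇_w v = [v, w]^{1,0}` for `(1,0)`-vector fields -/
  torsion_free : ∀ v w, p10 v = v → p10 w = w → nabla v w - nabla w v = p10 (lie v w)

attribute [instance] ComplexManifoldConnectionModel.grpW
  ComplexManifoldConnectionModel.modW

/-- The `(1,1)`-part of the curvature of `∇ + ∂̄`:
`R^{1,1}(u,v)w = [u, ∇_v w]^{1,0} − ∇_v([u,w]^{1,0}) − ∇_{[u,v]^{1,0}} w −
[[u,v]^{0,1}, w]^{1,0}`. -/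
def ComplexManifoldConnectionModel.R11 (S : ComplexManifoldConnectionModel)
    (u v w : S.W) : S.W :=
  S.p10 (S.lie u (S.nabla v w)) - S.nabla v (S.p10 (S.lie u w))
    - S.nabla (S.p10 (S.lie u v)) w - S.p10 (S.lie (S.p01 (S.lie u v)) w)

/-!
Subtracting the swapped curvature, torsion-freeness turns each pair `∇_a b − ∇_b a` into a
bracket. Splitting `[u, v]` and `[u, w]` into their `(1,0)`- and `(0,1)`-parts, the `∂̄`-terms
`[[u, v]^{0,1}, w]^{1,0}` and `[[u, w]^{0,1}, v]^{1,0}` restore the full brackets, and what is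
left is the `(1,0)`-part of the Jacobi identity for `u, v, w`.
-/

namespace ComplexManifoldConnectionModel

variable (S : ComplexManifoldConnectionModel)

theorem lie_add_right (a b b' : S.W) : S.lie a (b + b') = S.lie a b + S.lie a b' := by
  rw [S.lie_antisymm, S.lie_add_left, neg_add, ← S.lie_antisymm, ← S.lie_antisymm]

theorem lie_sub_right (a b b' : S.W) : S.lie a (b - b') = S.lie a b - S.lie a b' :=
  map_sub (AddMonoidHom.mk' (S.lie a) (S.lie_add_right a)) b b'

theorem lie_neg_right (a b : S.W) : S.lie a (-b) = -S.lie a b :=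
  map_neg (AddMonoidHom.mk' (S.lie a) (S.lie_add_right a)) b

theorem p10_eq_sub_p01 (a : S.W) : S.p10 a = a - S.p01 a :=
  eq_sub_of_add_eq (S.p_sum a)

theorem p10_lie_p10_right (a b : S.W) :
    S.p10 (S.lie b (S.p10 a)) = S.p10 (S.lie b a) + S.p10 (S.lie (S.p01 a) b) := by
  rw [S.p10_eq_sub_p01 a, lie_sub_right, map_sub, S.lie_antisymm b (S.p01 a), map_neg,
    sub_neg_eq_add]

variable {S}

theorem nabla_sub_nabla_p10 {v : S.W} (hv : S.p10 v = v) (a : S.W) :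
    S.nabla v (S.p10 a) - S.nabla (S.p10 a) v =
      S.p10 (S.lie v a) + S.p10 (S.lie (S.p01 a) v) := by
  rw [S.torsion_free v _ hv (S.p10_p10 a), p10_lie_p10_right]

theorem R11_sub_R11_swap {u v w : S.W} (hv : S.p10 v = v) (hw : S.p10 w = w) :
    S.R11 u v w - S.R11 u w v =
      S.p10 (S.lie u (S.lie v w)) + S.p10 (S.lie v (S.lie w u)) +
        S.p10 (S.lie w (S.lie u v)) := by
  have hvw : S.nabla v w - S.nabla w v = S.lie v w := by
    rw [S.torsion_free v w hv hw, S.invol10 v w hv hw]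
  have hu_vw : S.p10 (S.lie u (S.nabla v w)) - S.p10 (S.lie u (S.nabla w v)) =
      S.p10 (S.lie u (S.lie v w)) := by
    rw [← map_sub, ← lie_sub_right, hvw]
  have hwu : S.lie v (S.lie w u) = -S.lie v (S.lie u w) := by
    rw [S.lie_antisymm w u, lie_neg_right]
  rw [R11, R11, hwu, map_neg]
  linear_combination (norm := abel) hu_vw - nabla_sub_nabla_p10 hv (S.lie u w) +
    nabla_sub_nabla_p10 hw (S.lie u v)

end ComplexManifoldConnectionModel

theorem r11_symm_general (S : ComplexManifoldConnectionModel)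
    (u v w : S.W) (hv : S.p10 v = v) (hw : S.p10 w = w) :
    S.R11 u v w = S.R11 u w v := by
  rw [← sub_eq_zero, S.R11_sub_R11_swap hv hw, ← map_add, ← map_add, S.jacobi, map_zero]

/-- For a torsion-free `T^{1,0}X`-connection on `T^{1,0}X`, the
`(1,1)`-part of the curvature of `∇ + ∂̄` satisfies `R^{1,1}(u,v)w = R^{1,1}(u,w)v` for
all sections `u` of `T^{0,1}X` and `v, w` of `T^{1,0}X`. -/
theorem r11_symm (S : ComplexManifoldConnectionModel)
    (u v w : S.W) (hu : S.p01 u = u) (hv : S.p10 v = v) (hw : S.p10 w = w) :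
    S.R11 u v w = S.R11 u w v :=
  r11_symm_general S u v w hv hw
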